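/- Let K, K', L be augmented directed complexes with L decent, let f : K → K' and g : K → L, g' : K' → L be morphisms, and let h be an antihomotopy from g to g'∘f, i.e. a family of group homomorphisms h_i : K_i → L_{i+1} with d_{i+1}h_i − h_{i-1}d_i = (-1)^i((g'f)_i − g_i) for all i ≥ 0 (conventions h_{-1} = 0, d_0 = e) and h_i(K*_i) ⊆ L*_{i+1}. Then the maps (f,h)*_i : (L//g')_i → (L//g)_i defined by (f,h)*_i(u')_j = u'_j f_j + δ_{i,0}·e(u'_{-1}(1))·h_j constitute a morphism of augmented directed complexes (f,h)* : L//g' → L//g, and this morphism is over L (it commutes with the forgetful morphisms to L given by u ↦ u_{-1}(1)). -/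

import Mathlib

/-- An *augmented directed complex*: a chain complex of abelian groups in
non-negative degrees (`d n : X (n+1) →+ X n`), with an augmentation
`e : X 0 →+ ℤ` satisfying `e ∘ d₁ = 0`, and a positivity submonoid in each
degree. -/
structure ADC where
  X : ℕ → Type
  [inst : ∀ n, AddCommGroup (X n)]
  d : ∀ n, X (n + 1) →+ X n
  e : X 0 →+ ℤ
  dd : ∀ n x, d n (d (n + 1) x) = 0
  ed : ∀ x, e (d 0 x) = 0
  pos : ∀ n, AddSubmonoid (X n)

attribute [instance] ADC.inst

/-- Morphisms of augmented directed complexes: chain maps compatible with the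
augmentations and preserving the positivity submonoids. -/
structure ADCHom (K L : ADC) where
  f : ∀ n, K.X n →+ L.X n
  comm_d : ∀ n x, f n (K.d n x) = L.d n (f (n + 1) x)
  comm_e : ∀ x, L.e (f 0 x) = K.e x
  map_pos : ∀ n x, x ∈ K.pos n → f n x ∈ L.pos n

def ADCHom.id (K : ADC) : ADCHom K K where
  f _ := AddMonoidHom.id _
  comm_d _ _ := rfl
  comm_e _ := rfl
  map_pos _ _ hx := hx

def ADCHom.comp {K L M : ADC} (ψ : ADCHom L M) (φ : ADCHom K L) : ADCHom K M where
  f n := (ψ.f n).comp (φ.f n)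
  comm_d n x := by
    simp only [AddMonoidHom.comp_apply]
    rw [φ.comm_d, ψ.comm_d]
  comm_e x := by
    simp only [AddMonoidHom.comp_apply]
    rw [ψ.comm_e, φ.comm_e]
  map_pos n x hx := ψ.map_pos n _ (φ.map_pos n x hx)

/-- The carrier of the suspension of `K` : `ℤ` in degree `0` and `K.X n` in
degree `n+1`.  Equivalently, this is the family `K_{n-1}` (with `K_{-1} = ℤ`)
indexed by `n`. -/
def ADC.S (K : ADC) : ℕ → Type
  | 0 => ℤ
  | n + 1 => K.X n

instance ADC.instSAdd (K : ADC) : ∀ n, AddCommGroup (K.S n)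
  | 0 => inferInstanceAs (AddCommGroup ℤ)
  | n + 1 => inferInstanceAs (AddCommGroup (K.X n))

/-- The differential of the suspension : in lowest degree it is the
augmentation (`d₀ = e` convention), in higher degrees the differential of `K`. -/
def ADC.Sd (K : ADC) : ∀ n, K.S (n + 1) →+ K.S n
  | 0 => K.e
  | n + 1 => K.d n

/-- The positivity submonoids of the suspension : `ℕ ⊆ ℤ` in degree `0`. -/
noncomputable def ADC.Spos (K : ADC) : ∀ n, AddSubmonoid (K.S n)
  | 0 => AddSubmonoid.nonneg ℤ
  | n + 1 => K.pos n

/-- The suspension of a morphism (the identity of `ℤ` in degree `0`). -/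
def ADCHom.Sf {K L : ADC} (φ : ADCHom K L) : ∀ n, K.S n →+ L.S n
  | 0 => AddMonoidHom.id ℤ
  | n + 1 => φ.f n
/-- The underlying family of maps of a degree-`i` element of the slice
`M // g` : families `u_j : K_j → M_{i+j+1}` for `j ≥ -1`, encoded with
`K.S j = K_{j-1}` (so `K.S 0 = ℤ = K_{-1}`). -/
abbrev SlF (K M : ADC) (i : ℕ) : Type := ∀ j : ℕ, K.S j →+ M.S (j + i + 1)

def scast (M : ADC) {m n : ℕ} (h : m = n) : M.S m →+ M.S n where
  toFun x := h ▸ x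
  map_zero' := by subst h; rfl
  map_add' := by subst h; intro x y; rfl

/-- `j ↦ d_{i+j+1} ∘ u_j`. -/
def mainC (K M : ADC) (i : ℕ) (u : SlF K M i) (j : ℕ) : K.S j →+ M.S (j + i) :=
  (M.Sd (j + i)).comp (u j)

/-- `j ↦ u_{j-1} ∘ d_j` (with `u_{-2} = 0`). -/
def prevC (K M : ADC) (i : ℕ) (u : SlF K M i) : ∀ j : ℕ, K.S j →+ M.S (j + i)
  | 0 => 0
  | s + 1 => (scast M (show s + i + 1 = s + 1 + i by omega)).comp ((u s).comp (K.Sd s))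

/-- The differential of the slice `M // g` :
`d_i(u)_j = (-1)^{j+1} (d_{i+j+1} u_j - u_{j-1} d_j)`. -/
def Dsl (K M : ADC) (i : ℕ) (u : SlF K M (i + 1)) : SlF K M i := fun j =>
  ((-1 : ℤ) ^ j) • (mainC K M (i + 1) u j - prevC K M (i + 1) u j)

/-- The degree-`0` condition of the slice `M // g` :
`(-1)^{j+1}(d_{j+1} u_j - u_{j-1} d_j) = e(u_{-1}(1)) · g_j`. -/
def Cond (K M : ADC) (g : ADCHom K M) (u : SlF K M 0) : Prop :=
  ∀ j, ((-1 : ℤ) ^ j) • (mainC K M 0 u j - prevC K M 0 u j) =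
    M.e ((u 0) (1 : ℤ)) • g.Sf j

/-- Positivity for slice elements : `u_j(K*_j) ⊆ M*_{i+j+1}`. -/
def SlPos (K M : ADC) (i : ℕ) (u : SlF K M i) : Prop :=
  ∀ j x, x ∈ K.Spos j → u j x ∈ M.Spos (j + i + 1)
/-- An *antihomotopy* from `a` to `b` (two morphisms `K → L` of augmented
directed complexes): a family `h_i : K_i →+ L_{i+1}` satisfying
`d_{i+1} h_i - h_{i-1} d_i = (-1)^i (b_i - a_i)` (with the conventions
`h_{-1} = 0` and `d_0 = e`, so that for `i = 0` one gets
`d_1 h_0 = b_0 - a_0`), and preserving positivity. -/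
structure Antihtpy {K L : ADC} (a b : ADCHom K L) where
  h : ∀ i, K.X i →+ L.X (i + 1)
  cond0 : ∀ x, L.d 0 (h 0 x) = b.f 0 x - a.f 0 x
  cond : ∀ i x, L.d (i + 1) (h (i + 1) x) - h i (K.d i x) =
    ((-1 : ℤ) ^ (i + 1)) • (b.f (i + 1) x - a.f (i + 1) x)
  map_pos : ∀ i x, x ∈ K.pos i → h i x ∈ L.pos (i + 1)

/-- An augmented directed complex is *decent* if the augmentation is
non-negative on the degree-`0` positivity submonoid. -/
def ADC.Decent (L : ADC) : Prop := ∀ x ∈ L.pos 0, 0 ≤ L.e x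
/-- The extension of a family `h_i : K_i →+ L_{i+1}` to the suspended
indexing, with `h_{-1} = 0`. -/
def Ehx (K L : ADC) (hh : ∀ i, K.X i →+ L.X (i + 1)) : ∀ j, K.S j →+ L.S (j + 1)
  | 0 => 0
  | j + 1 => hh j

/-- The map `(f,h)^*` on slice elements :
`(f,h)^*_i(u')_j = u'_j ∘ f_j + δ_{i,0} · e(u'_{-1}(1)) · h_j`. -/
def slApp {K K' L : ADC} (f : ADCHom K K') (hh : ∀ i, K.X i →+ L.X (i + 1)) :
    ∀ i, SlF K' L i → SlF K L i
  | 0, u' => fun j => (u' j).comp (f.Sf j) + L.e ((u' 0) (1 : ℤ)) • Ehx K L hh j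
  | i + 1, u' => fun j => (u' j).comp (f.Sf j)

/-!
`(f,h)^*` is precomposition with `f`, plus the correction `e(u'_{-1}(1)) • h` in degree `0`.
Precomposition commutes with the slice differentials because `f` is a chain map, and the
correction is killed by the differential because `e ∘ d = 0`. Under the suspended indexing the
antihomotopy identities say that the slice boundary of `h` is `g - g' ∘ f`, which turns the
degree-`0` condition `∂u' = e(u'_{-1}(1)) • g'` into `∂((f,h)^* u') = e(u'_{-1}(1)) • g`.
Positivity of the correction needs `e(u'_{-1}(1)) ≥ 0`, which is where decency of `L` enters.
-/

section SliceMorphism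

variable {K K' L M : ADC}

namespace ADCHom

theorem Sf_Sd (f : ADCHom K K') : ∀ (j : ℕ) (x : K.S (j + 1)),
    f.Sf j (K.Sd j x) = K'.Sd j (f.Sf (j + 1) x)
  | 0, x => (f.comm_e x).symm
  | j + 1, x => f.comm_d j x

theorem Sf_mem_Spos (f : ADCHom K K') : ∀ {j : ℕ} {x : K.S j},
    x ∈ K.Spos j → f.Sf j x ∈ K'.Spos j
  | 0, _, hx => hx
  | j + 1, x, hx => f.map_pos j x hx

theorem comp_Sf (g : ADCHom K' L) (f : ADCHom K K') : ∀ (j : ℕ) (x : K.S j),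
    (g.comp f).Sf j x = g.Sf j (f.Sf j x)
  | 0, _ => rfl
  | _ + 1, _ => rfl

end ADCHom

theorem prevC_add (i : ℕ) (u v : SlF K M i) :
    ∀ j, prevC K M i (u + v) j = prevC K M i u j + prevC K M i v j
  | 0 => (add_zero 0).symm
  | s + 1 => by ext x; simp [prevC]

/-- The expression `(-1)^{j+1}(d u_j - u_{j-1} d)` shared by `Dsl` (degree `i + 1`) and
`Cond` (degree `0`). -/
def sliceBd (K M : ADC) (i : ℕ) : SlF K M i →+ ∀ j, K.S j →+ M.S (j + i) where
  toFun u j := (-1 : ℤ) ^ j • (mainC K M i u j - prevC K M i u j)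
  map_zero' := by
    funext j
    cases j <;> simp [mainC, prevC]
  map_add' u v := by
    funext j
    rw [Pi.add_apply, prevC_add, ← smul_add]
    simp only [mainC, Pi.add_apply, AddMonoidHom.comp_add]
    abel_nf

theorem cond_iff_sliceBd (g : ADCHom K M) (u : SlF K M 0) :
    Cond K M g u ↔ ∀ j, sliceBd K M 0 u j = M.e (u 0 (1 : ℤ)) • g.Sf j :=
  Iff.rfl

theorem SlPos.add {i : ℕ} {u v : SlF K M i} (hu : SlPos K M i u) (hv : SlPos K M i v) :
    SlPos K M i (u + v) :=
  fun j x hx => (M.Spos _).add_mem (hu j x hx) (hv j x hx)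

theorem SlPos.zsmul {i : ℕ} {u : SlF K M i} (hu : SlPos K M i u) {c : ℤ} (hc : 0 ≤ c) :
    SlPos K M i (c • u) := by
  lift c to ℕ using hc
  intro j x hx
  rw [Pi.smul_apply, AddMonoidHom.smul_apply, natCast_zsmul]
  exact AddSubmonoid.nsmul_mem _ (hu j x hx) c

def slPrecomp (f : ADCHom K K') (i : ℕ) : SlF K' L i →+ SlF K L i where
  toFun u j := (u j).comp (f.Sf j)
  map_zero' := rfl
  map_add' _ _ := rfl

theorem sliceBd_slPrecomp (f : ADCHom K K') (i : ℕ) (u : SlF K' L i) :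
    ∀ (j : ℕ) (x : K.S j), sliceBd K L i (slPrecomp f i u) j x = sliceBd K' L i u j (f.Sf j x)
  | 0, _ => rfl
  | s + 1, x => by
    simp only [sliceBd, slPrecomp, mainC, prevC, AddMonoidHom.coe_mk, ZeroHom.coe_mk,
      AddMonoidHom.smul_apply, AddMonoidHom.sub_apply, AddMonoidHom.comp_apply, f.Sf_Sd s x]

theorem Dsl_slPrecomp (f : ADCHom K K') (i : ℕ) (u : SlF K' L (i + 1)) :
    Dsl K L i (slPrecomp f (i + 1) u) = slPrecomp f i (Dsl K' L i u) := by
  funext j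
  ext x
  exact sliceBd_slPrecomp f (i + 1) u j x

theorem slPos_slPrecomp (f : ADCHom K K') {i : ℕ} {u : SlF K' L i} (hu : SlPos K' L i u) :
    SlPos K L i (slPrecomp f i u) :=
  fun j _ hx => hu j _ (f.Sf_mem_Spos hx)

theorem Antihtpy.sliceBd_Ehx {a b : ADCHom K L} (h : Antihtpy a b) :
    ∀ (j : ℕ) (x : K.S j), sliceBd K L 0 (Ehx K L h.h) j x = a.Sf j x - b.Sf j x
  | 0 => fun x => by simp [sliceBd, mainC, prevC, Ehx, ADCHom.Sf]
  | 1 => fun (x : K.X 0) => by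
    change (-1 : ℤ) • (L.d 0 (h.h 0 x) - 0) = a.f 0 x - b.f 0 x
    rw [h.cond0, sub_zero, neg_one_zsmul, neg_sub]
  | s + 2 => fun (x : K.X (s + 1)) => by
    change (-1 : ℤ) ^ (s + 2) • (L.d (s + 1) (h.h (s + 1) x) - h.h s (K.d s x))
      = a.f (s + 1) x - b.f (s + 1) x
    rw [h.cond, smul_smul, ← pow_add, show s + 2 + (s + 1) = 2 * (s + 1) + 1 by ring,
      pow_succ, pow_mul, neg_one_sq, one_pow, one_mul, neg_one_zsmul, neg_sub]

theorem slPos_Ehx {hh : ∀ i, K.X i →+ L.X (i + 1)}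
    (hpos : ∀ i x, x ∈ K.pos i → hh i x ∈ L.pos (i + 1)) : SlPos K L 0 (Ehx K L hh)
  | 0, _, _ => (L.Spos 1).zero_mem
  | j + 1, x, hx => hpos j x hx

section slApp

variable (f : ADCHom K K') (hh : ∀ i, K.X i →+ L.X (i + 1))

theorem slApp_zero_eq (u : SlF K' L 0) :
    slApp f hh 0 u = slPrecomp f 0 u + L.e (u 0 (1 : ℤ)) • Ehx K L hh :=
  rfl

theorem slApp_succ_eq (i : ℕ) (u : SlF K' L (i + 1)) :
    slApp f hh (i + 1) u = slPrecomp f (i + 1) u :=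
  rfl

theorem slApp_apply_zero_one :
    ∀ (i : ℕ) (u : SlF K' L i), slApp f hh i u 0 (1 : ℤ) = u 0 (1 : ℤ)
  | 0, u => by
    change u 0 (1 : ℤ) + L.e (u 0 (1 : ℤ)) • (0 : L.S 1) = _
    rw [smul_zero]
    exact add_zero _
  | _ + 1, _ => rfl

theorem slApp_add : ∀ (i : ℕ) (u v : SlF K' L i),
    slApp f hh i (u + v) = slApp f hh i u + slApp f hh i v
  | 0, u, v => by
    have he : L.e ((u + v) 0 (1 : ℤ)) = L.e (u 0 (1 : ℤ)) + L.e (v 0 (1 : ℤ)) :=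
      L.e.map_add _ _
    rw [slApp_zero_eq, slApp_zero_eq, slApp_zero_eq, map_add, he, add_smul]
    abel
  | i + 1, u, v => map_add (slPrecomp f (i + 1)) u v

theorem slApp_zero : ∀ i : ℕ, slApp f hh i 0 = 0
  | 0 => by
    rw [slApp_zero_eq, map_zero, zero_add]
    change L.e 0 • _ = _
    rw [map_zero, zero_smul]
  | i + 1 => map_zero (slPrecomp f (i + 1))

theorem Dsl_slApp : ∀ (i : ℕ) (u : SlF K' L (i + 1)),
    Dsl K L i (slApp f hh (i + 1) u) = slApp f hh i (Dsl K' L i u)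
  | 0, u => by
    have he : L.e (Dsl K' L 0 u 0 (1 : ℤ)) = 0 := by
      change L.e ((1 : ℤ) • (L.d 0 (u 0 (1 : ℤ)) - 0)) = 0
      rw [one_smul, sub_zero]
      exact L.ed _
    rw [slApp_zero_eq, he, zero_smul, add_zero, slApp_succ_eq, Dsl_slPrecomp]
  | i + 1, u => Dsl_slPrecomp f (i + 1) u

theorem slPos_slApp (hdec : L.Decent) (hpos : ∀ i x, x ∈ K.pos i → hh i x ∈ L.pos (i + 1)) :
    ∀ (i : ℕ) (u : SlF K' L i), SlPos K' L i u → SlPos K L i (slApp f hh i u)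
  | 0, _, hu => (slPos_slPrecomp f hu).add
      ((slPos_Ehx hpos).zsmul (hdec _ (hu 0 (1 : ℤ) Int.one_nonneg)))
  | _ + 1, _, hu => slPos_slPrecomp f hu

end slApp

theorem cond_slApp {f : ADCHom K K'} {g : ADCHom K L} {g' : ADCHom K' L}
    (h : Antihtpy g (g'.comp f)) {u : SlF K' L 0} (hu : Cond K' L g' u) :
    Cond K L g (slApp f h.h 0 u) := by
  rw [cond_iff_sliceBd, slApp_apply_zero_one]
  intro j
  ext x
  set c := L.e (u 0 (1 : ℤ))
  have hu' : sliceBd K' L 0 u j (f.Sf j x) = c • g'.Sf j (f.Sf j x) :=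
    DFunLike.congr_fun ((cond_iff_sliceBd g' u).mp hu j) _
  calc sliceBd K L 0 (slApp f h.h 0 u) j x
      = sliceBd K' L 0 u j (f.Sf j x) + c • (g.Sf j x - (g'.comp f).Sf j x) := by
        rw [slApp_zero_eq, map_add, map_zsmul, Pi.add_apply, AddMonoidHom.add_apply,
          sliceBd_slPrecomp, Pi.smul_apply, AddMonoidHom.smul_apply, h.sliceBd_Ehx]
    _ = c • g.Sf j x := by
        rw [hu', ADCHom.comp_Sf, ← smul_add, add_sub_cancel]
    _ = (c • g.Sf j) x := rfl

end SliceMorphism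

/-- Given morphisms `f : K → K'`, `g : K → L`, `g' : K' → L`
of augmented directed complexes with `L` decent, and an antihomotopy `h` from
`g` to `g' ∘ f`, the maps `(f,h)^*_i : (L//g')_i → (L//g)_i` defined by
`(f,h)^*_i(u')_j = u'_j f_j + δ_{i,0} e(u'_{-1}(1)) h_j` constitute a morphism
of augmented directed complexes `(f,h)^* : L//g' → L//g` (additive, compatible
with the differentials, with the degree-0 conditions, with the augmentations
and with positivity), and this morphism is over `L` (it commutes with the
forgetful maps `u ↦ u_{-1}(1)` to `L`). -/
theorem statement16 (K K' L : ADC) (f : ADCHom K K') (g : ADCHom K L)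
    (g' : ADCHom K' L) (hdec : L.Decent) (h : Antihtpy g (g'.comp f)) :
    (∀ (i : ℕ) (u v : SlF K' L i),
      slApp f h.h i (u + v) = slApp f h.h i u + slApp f h.h i v) ∧
    (∀ i : ℕ, slApp f h.h i 0 = 0) ∧
    (∀ (i : ℕ) (u : SlF K' L (i + 1)),
      Dsl K L i (slApp f h.h (i + 1) u) = slApp f h.h i (Dsl K' L i u)) ∧
    (∀ u : SlF K' L 0, Cond K' L g' u → Cond K L g (slApp f h.h 0 u)) ∧
    (∀ u : SlF K' L 0,
      L.e (((slApp f h.h 0 u) 0) (1 : ℤ)) = L.e ((u 0) (1 : ℤ))) ∧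
    (∀ (i : ℕ) (u : SlF K' L i), SlPos K' L i u → SlPos K L i (slApp f h.h i u)) ∧
    (∀ (i : ℕ) (u : SlF K' L i),
      ((slApp f h.h i u) 0) (1 : ℤ) = (u 0) (1 : ℤ)) :=
  ⟨slApp_add f h.h, slApp_zero f h.h, Dsl_slApp f h.h, fun _ hu => cond_slApp h hu,
    fun u => congrArg L.e (slApp_apply_zero_one f h.h 0 u),
    slPos_slApp f h.h hdec h.map_pos, slApp_apply_zero_one f h.h⟩
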